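/- arXiv:0812.1401 — 2 statements merged into one kernel-verified Lean document; each statement's English description precedes it below -/
import Mathlib

section
/- Let E and F be Banach spaces, n a positive integer and 1 ≤ p < ∞. A continuous n-homogeneous polynomial P : E → F is p-dominated if and only if there exist a constant C > 0 and a regular Borel probability measure μ on the closed unit ball B_{E*} of the dual E* equipped with the weak* topology such that ‖P(x)‖ ≤ C · (∫_{B_{E*}} |x*(x)|^p dμ(x*))^{n/p} for every x ∈ E; moreover, ‖P‖_{d,p} equals the least constant C for which such a measure exists. -/
open MeasureTheory Finset
open scoped Classical

noncomputable section

/-- The closed unit ball of the dual of `E`, equipped with the weak* topology. -/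
abbrev DualBall (𝕜 E : Type) [RCLike 𝕜] [NormedAddCommGroup E] [NormedSpace 𝕜 E] : Type :=
  {φ : WeakDual 𝕜 E // ‖WeakDual.toStrongDual φ‖ ≤ 1}

variable (𝕜 : Type) [RCLike 𝕜] {E F G : Type} [NormedAddCommGroup E] [NormedSpace 𝕜 E]
  [NormedAddCommGroup F] [NormedSpace 𝕜 F] [NormedAddCommGroup G] [NormedSpace 𝕜 G]

instance : MeasurableSpace (DualBall 𝕜 E) := borel _
instance : BorelSpace (DualBall 𝕜 E) := ⟨rfl⟩

/-- `P : E → F` is a continuous `n`-homogeneous polynomial: `P x = M (x, …, x)` for some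
continuous `n`-linear map `M`. -/
def IsHomogPoly (n : ℕ) (P : E → F) : Prop :=
  ∃ M : ContinuousMultilinearMap 𝕜 (fun _ : Fin n => E) F, ∀ x, P x = M (fun _ => x)

/-- The `p`-domination inequality for the `n`-homogeneous map `P` with constant `C`. -/
def DomIneq (p : ℝ) (n : ℕ) (P : E → F) (C : ℝ) : Prop :=
  ∀ (m : ℕ) (x : Fin m → E),
    (∑ j, ‖P (x j)‖ ^ (p / (n : ℝ))) ^ ((n : ℝ) / p) ≤
      C * ⨆ φ : DualBall 𝕜 E, (∑ j, ‖φ.1 (x j)‖ ^ p) ^ ((n : ℝ) / p)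

/-- The `p`-dominated norm `‖P‖_{d,p}`: the infimum of the constants in the domination
inequality. -/
def domNorm (p : ℝ) (n : ℕ) (P : E → F) : ℝ :=
  sInf {C : ℝ | 0 < C ∧ DomIneq 𝕜 p n P C}

/-- The element `(e_x)^n` of `L_{p/n}(μ)`, i.e. the class of the continuous function
`x* ↦ ⟨x*, x⟩ ^ n` on the dual ball. -/
def evalPowLp (p : ℝ) (n : ℕ) (μ : Measure (DualBall 𝕜 E)) (x : E) :
    Lp 𝕜 (ENNReal.ofReal (p / (n : ℝ))) μ :=
  if h : MemLp (fun φ : DualBall 𝕜 E => (φ.1 x) ^ n) (ENNReal.ofReal (p / (n : ℝ))) μ then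
    h.toLp _
  else 0

/-- The subspace `E^{p/n}` of `L_{p/n}(μ)` spanned by the functions `(e_x)^n`, `x ∈ E`. -/
def Epn (p : ℝ) (n : ℕ) (μ : Measure (DualBall 𝕜 E)) :
    Submodule 𝕜 (Lp 𝕜 (ENNReal.ofReal (p / (n : ℝ))) μ) :=
  Submodule.span 𝕜 (Set.range (evalPowLp 𝕜 p n μ))

/-- The norm `π_{p/n}` on `E^{p/n}`. -/
def piNorm (p : ℝ) (n : ℕ) (μ : Measure (DualBall 𝕜 E))
    (g : Lp 𝕜 (ENNReal.ofReal (p / (n : ℝ))) μ) : ℝ :=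
  sInf {t : ℝ | ∃ (m : ℕ) (c : Fin m → 𝕜) (x : Fin m → E),
    g = ∑ i, c i • evalPowLp 𝕜 p n μ (x i) ∧
    t = ∑ i, ‖c i‖ * ‖evalPowLp 𝕜 p n μ (x i)‖}

/-- The element `e_x` of `L_p(μ)`, i.e. the class of the continuous function
`x* ↦ ⟨x*, x⟩` on the dual ball. -/
def evalLp (p : ℝ) (μ : Measure (DualBall 𝕜 E)) (x : E) : Lp 𝕜 (ENNReal.ofReal p) μ :=
  if h : MemLp (fun φ : DualBall 𝕜 E => φ.1 x) (ENNReal.ofReal p) μ then h.toLp _ else 0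

/-- The absolutely `p`-summing inequality for `S` with constant `C`. -/
def SummingIneq (p : ℝ) (S : E → G) (C : ℝ) : Prop :=
  ∀ (m : ℕ) (x : Fin m → E),
    (∑ j, ‖S (x j)‖ ^ p) ^ (1 / p) ≤
      C * ⨆ φ : DualBall 𝕜 E, (∑ j, ‖φ.1 (x j)‖ ^ p) ^ (1 / p)

/-- The `p`-summing norm `π_p(S)`. -/
def summingNorm (p : ℝ) (S : E → G) : ℝ :=
  sInf {C : ℝ | 0 < C ∧ SummingIneq 𝕜 p S C}

/-- The sup norm of a map on the closed unit ball. -/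
def supNorm (Q : G → F) : ℝ := ⨆ y : {y : G // ‖y‖ ≤ 1}, ‖Q y.1‖

end

/-! Pietsch's domination argument. By `n`-homogeneity of `P`, the functions
`φ ↦ ‖P x‖ ^ (p / n) - C ^ (p / n) * ‖φ x‖ ^ p` on the weak*-compact dual ball are closed under
positive scaling, so their finite sums form a convex cone, and the domination inequality says
exactly that no function of this cone is strictly positive everywhere. Separating the cone from
the open cone of strictly positive continuous functions (Hahn–Banach) gives a normalized positive
functional that is nonpositive on it; by the Riesz–Markov–Kakutani theorem this functional is
integration against a regular Borel probability measure `μ`, whence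
`‖P x‖ ^ (p / n) ≤ C ^ (p / n) * ∫ ‖φ x‖ ^ p ∂μ`. Conversely, integrating this bound and comparing
`∫ ∑ j, ‖φ (x j)‖ ^ p ∂μ` with a point where the integrand exceeds its mean gives back the
domination inequality with the same constant, so both sets of admissible constants coincide. -/

open scoped CompactlySupported

lemma nonpos_of_forall_pos_mul_le {c b : ℝ} (h : ∀ t : ℝ, 0 < t → t * c ≤ b) : c ≤ 0 := by
  by_contra! hc
  have := h ((|b| + 1) / c) (by positivity)
  rw [div_mul_cancel₀ _ hc.ne'] at this
  linarith [le_abs_self b]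

namespace ContinuousMap

variable {X : Type*} [TopologicalSpace X]

lemma convex_setOf_forall_pos : Convex ℝ {g : C(X, ℝ) | ∀ x, 0 < g x} := by
  intro g hg h hh a b ha hb hab x
  simp only [add_apply, smul_apply, smul_eq_mul]
  rcases ha.eq_or_lt with rfl | ha
  · rw [zero_add] at hab; subst hab; simpa using hh x
  · nlinarith [hg x, hh x]

variable [CompactSpace X]

lemma isOpen_setOf_forall_pos : IsOpen {g : C(X, ℝ) | ∀ x, 0 < g x} := by
  simpa [Set.MapsTo] using
    isOpen_setOfPred_mapsTo (X := X) isCompact_univ (isOpen_Ioi (a := (0 : ℝ)))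

theorem exists_positiveLinearMap_nonpos_on (D : ConvexCone ℝ C(X, ℝ)) (hD₀ : 0 ∈ D)
    (hD_nonpos : ∀ g ∈ D, ∃ x, g x ≤ 0) :
    ∃ Λ : C(X, ℝ) →ₚ[ℝ] ℝ, Λ 1 = 1 ∧ ∀ g ∈ D, Λ g ≤ 0 := by
  have hdisj : Disjoint {g : C(X, ℝ) | ∀ x, 0 < g x} D := by
    rw [Set.disjoint_left]
    intro g hg hgD
    obtain ⟨x, hx⟩ := hD_nonpos g hgD
    exact (hg x).not_ge hx
  obtain ⟨L, u, hLpos, hLD⟩ :=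
    geometric_hahn_banach_open convex_setOf_forall_pos isOpen_setOf_forall_pos D.convex hdisj
  -- Both separated sets are cones, so `L` has a sign on each of them.
  have hu : u ≤ 0 := by simpa using hLD 0 hD₀
  have hL1 : L 1 < 0 := (hLpos 1 fun _ => one_pos).trans_le hu
  have hL_nonneg : ∀ g ∈ D, 0 ≤ L g := fun g hg => by
    refine neg_nonpos.1 (nonpos_of_forall_pos_mul_le (b := -u) fun t ht => ?_)
    have := hLD _ (D.smul_mem ht hg)
    rw [map_smul, smul_eq_mul] at this
    linarith
  have hL_nonpos : ∀ h : C(X, ℝ), 0 ≤ h → L h ≤ 0 := fun h hh => by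
    refine nonpos_of_forall_pos_mul_le (b := u - L 1) fun t ht => ?_
    have := hLpos (1 + t • h) fun x => by
      simpa using add_pos_of_pos_of_nonneg one_pos (mul_nonneg ht.le (hh x))
    rw [map_add, map_smul, smul_eq_mul] at this
    linarith
  refine ⟨PositiveLinearMap.mk₀ ((L 1)⁻¹ • L.toLinearMap) fun h hh => ?_, ?_, fun g hg => ?_⟩
  · exact mul_nonneg_of_nonpos_of_nonpos (inv_nonpos.2 hL1.le) (hL_nonpos h hh)
  · exact inv_mul_cancel₀ hL1.ne
  · exact mul_nonpos_of_nonpos_of_nonneg (inv_nonpos.2 hL1.le) (hL_nonneg g hg)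

variable [T2Space X] [MeasurableSpace X] [BorelSpace X]

theorem exists_isProbabilityMeasure_integral_eq (Λ : C(X, ℝ) →ₚ[ℝ] ℝ) (hΛ : Λ 1 = 1) :
    ∃ μ : Measure X, IsProbabilityMeasure μ ∧ μ.Regular ∧ ∀ f : C(X, ℝ), ∫ x, f x ∂μ = Λ f := by
  let Λc : C_c(X, ℝ) →ₚ[ℝ] ℝ :=
    { toFun f := Λ f.toContinuousMap
      map_add' f g := map_add Λ _ _
      map_smul' c f := map_smul Λ c _
      monotone' f g hfg := Λ.monotone' hfg }
  have hΛc (f : C(X, ℝ)) : ∫ x, f x ∂(RealRMK.rieszMeasure Λc) = Λ f :=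
    RealRMK.integral_rieszMeasure Λc (CompactlySupportedContinuousMap.continuousMapEquiv f)
  refine ⟨RealRMK.rieszMeasure Λc, ⟨?_⟩, inferInstance, hΛc⟩
  simpa [hΛ, measureReal_def, ENNReal.toReal_eq_one_iff] using hΛc 1

theorem exists_isProbabilityMeasure_integral_nonpos {ι : Type*} (g : ι → C(X, ℝ))
    (hg_smul : ∀ i, ∀ t : ℝ, 0 < t → ∃ j, g j = t • g i)
    (hg : ∀ (m : ℕ) (i : Fin m → ι), ∃ x, ∑ k, g (i k) x ≤ 0) :
    ∃ μ : Measure X, IsProbabilityMeasure μ ∧ μ.Regular ∧ ∀ i, ∫ x, g i x ∂μ ≤ 0 := by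
  choose s hs using hg_smul
  let D : ConvexCone ℝ C(X, ℝ) :=
    { carrier := {f | ∃ (m : ℕ) (i : Fin m → ι), f = ∑ k, g (i k)}
      smul_mem' := by
        rintro t ht _ ⟨m, i, rfl⟩
        exact ⟨m, fun k => s (i k) t ht, by simp only [Finset.smul_sum, hs]⟩
      add_mem' := by
        rintro _ ⟨m, i, rfl⟩ _ ⟨m', i', rfl⟩
        exact ⟨m + m', Fin.append i i', by simp [Fin.sum_univ_add]⟩ }
  obtain ⟨Λ, hΛ₁, hΛD⟩ := exists_positiveLinearMap_nonpos_on D ⟨0, Fin.elim0, by simp⟩ <| by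
    rintro _ ⟨m, i, rfl⟩
    simpa using hg m i
  obtain ⟨μ, hμ, hμreg, hμΛ⟩ := exists_isProbabilityMeasure_integral_eq Λ hΛ₁
  exact ⟨μ, hμ, hμreg, fun i => hμΛ (g i) ▸ hΛD (g i) ⟨1, fun _ => i, by simp⟩⟩

end ContinuousMap

lemma Real.le_mul_rpow_inv_iff {a b c r : ℝ} (ha : 0 ≤ a) (hb : 0 ≤ b) (hc : 0 ≤ c) (hr : 0 < r) :
    a ≤ c * b ^ r⁻¹ ↔ a ^ r ≤ c ^ r * b := by
  rw [← Real.rpow_le_rpow_iff ha (by positivity) hr, Real.mul_rpow hc (by positivity),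
    Real.rpow_inv_rpow hb hr.ne']

section Domination

variable (𝕜 : Type) [RCLike 𝕜] {E F : Type} [NormedAddCommGroup E] [NormedSpace 𝕜 E]
  [NormedAddCommGroup F]

instance : CompactSpace (DualBall 𝕜 E) :=
  isCompact_iff_compactSpace.mp <| by
    have := WeakDual.isCompact_closedBall (𝕜 := 𝕜) (E := E) 0 1
    simp only [Set.preimage, Metric.mem_closedBall, dist_zero_right] at this
    exact this

instance : Nonempty (DualBall 𝕜 E) := ⟨⟨0, by simp⟩⟩

lemma DualBall.continuous_norm_apply_rpow {p : ℝ} (hp : 0 ≤ p) (x : E) :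
    Continuous fun φ : DualBall 𝕜 E => ‖φ.1 x‖ ^ p := by
  have : Continuous fun φ : DualBall 𝕜 E => φ.1 x :=
    (WeakDual.eval_continuous x).comp continuous_subtype_val
  fun_prop (disch := exact hp)

lemma DualBall.integrable_norm_apply_rpow (μ : Measure (DualBall 𝕜 E)) [IsFiniteMeasure μ]
    {p : ℝ} (hp : 0 ≤ p) (x : E) : Integrable (fun φ : DualBall 𝕜 E => ‖φ.1 x‖ ^ p) μ :=
  (continuous_norm_apply_rpow 𝕜 hp x).integrable_of_hasCompactSupport
    (HasCompactSupport.of_compactSpace _)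

variable {𝕜} {n : ℕ} {p C : ℝ} {P : E → F}

lemma IsHomogPoly.norm_map_smul [NormedSpace 𝕜 F] (hP : IsHomogPoly 𝕜 n P) (c : 𝕜) (x : E) :
    ‖P (c • x)‖ = ‖c‖ ^ n * ‖P x‖ := by
  obtain ⟨M, hM⟩ := hP
  rw [hM, hM, M.map_smul_univ (fun _ => c) (fun _ => x), Finset.prod_const, Finset.card_univ,
    Fintype.card_fin, norm_smul, norm_pow]

variable (𝕜)

/-- Compactness of the dual ball turns the supremum in the domination inequality into a
maximum. -/
lemma domIneq_iff (hn : n ≠ 0) (hp : 0 < p) (hC : 0 ≤ C) :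
    DomIneq 𝕜 p n P C ↔ ∀ (m : ℕ) (x : Fin m → E), ∃ φ : DualBall 𝕜 E,
      ∑ j, ‖P (x j)‖ ^ (p / n) ≤ C ^ (p / n) * ∑ j, ‖φ.1 (x j)‖ ^ p := by
  have hpn : 0 < p / n := by positivity
  refine forall₂_congr fun m x => ?_
  set S : DualBall 𝕜 E → ℝ := fun φ => ∑ j, ‖φ.1 (x j)‖ ^ p
  have hS : Continuous S :=
    continuous_finsetSum _ fun j _ => DualBall.continuous_norm_apply_rpow 𝕜 hp.le (x j)
  have hS₀ (φ : DualBall 𝕜 E) : 0 ≤ S φ := by positivity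
  obtain ⟨φ₀, -, hφ₀⟩ := isCompact_univ.exists_isMaxOn Set.univ_nonempty hS.continuousOn
  have hmax (φ : DualBall 𝕜 E) : S φ ≤ S φ₀ := hφ₀ (Set.mem_univ φ)
  have hmax_rpow (φ : DualBall 𝕜 E) : S φ ^ ((n : ℝ) / p) ≤ S φ₀ ^ ((n : ℝ) / p) :=
    Real.rpow_le_rpow (hS₀ φ) (hmax φ) (by positivity)
  have hsup : ⨆ φ, S φ ^ ((n : ℝ) / p) = S φ₀ ^ ((n : ℝ) / p) :=
    le_antisymm (ciSup_le hmax_rpow) (le_ciSup ⟨_, Set.forall_mem_range.2 hmax_rpow⟩ φ₀)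
  have hA : 0 ≤ ∑ j, ‖P (x j)‖ ^ (p / n) := by positivity
  rw [hsup, ← inv_div p (n : ℝ), Real.le_mul_rpow_inv_iff (by positivity) (hS₀ φ₀) hC hpn,
    Real.rpow_inv_rpow hA hpn.ne']
  exact ⟨fun h => ⟨φ₀, h⟩, fun ⟨φ, hφ⟩ => hφ.trans (by gcongr; exact hmax φ)⟩

theorem exists_measure_of_domIneq [NormedSpace 𝕜 F] (hn : n ≠ 0) (hp : 0 < p)
    (hP : IsHomogPoly 𝕜 n P) (hC : 0 < C) (h : DomIneq 𝕜 p n P C) :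
    ∃ μ : Measure (DualBall 𝕜 E), IsProbabilityMeasure μ ∧ μ.Regular ∧
      ∀ x : E, ‖P x‖ ≤ C * (∫ φ, ‖φ.1 x‖ ^ p ∂μ) ^ ((n : ℝ) / p) := by
  have hpn : 0 < p / n := by positivity
  let g (x : E) : C(DualBall 𝕜 E, ℝ) :=
    ⟨fun φ => ‖P x‖ ^ (p / n) - C ^ (p / n) * ‖φ.1 x‖ ^ p,
      continuous_const.sub (continuous_const.mul (DualBall.continuous_norm_apply_rpow 𝕜 hp.le x))⟩
  have hg_smul (c : 𝕜) (x : E) : g (c • x) = ‖c‖ ^ p • g x := by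
    ext φ
    simp only [g, ContinuousMap.coe_mk, ContinuousMap.smul_apply, smul_eq_mul, hP.norm_map_smul,
      map_smul, norm_mul]
    rw [Real.mul_rpow (by positivity) (norm_nonneg _), ← Real.rpow_natCast,
      ← Real.rpow_mul (norm_nonneg _), mul_div_cancel₀ _ (Nat.cast_ne_zero.2 hn),
      Real.mul_rpow (norm_nonneg _) (norm_nonneg _)]
    ring
  obtain ⟨μ, hμ, hreg, hμg⟩ := ContinuousMap.exists_isProbabilityMeasure_integral_nonpos g
    (fun x t ht => ⟨((t ^ p⁻¹ : ℝ) : 𝕜) • x, by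
      rw [hg_smul, RCLike.norm_ofReal, abs_of_nonneg (by positivity),
        Real.rpow_inv_rpow ht.le hp.ne']⟩)
    (fun m x => by
      obtain ⟨φ, hφ⟩ := (domIneq_iff 𝕜 hn hp hC.le).1 h m x
      exact ⟨φ, by simpa [g, Finset.sum_sub_distrib, Finset.mul_sum] using hφ⟩)
  refine ⟨μ, hμ, hreg, fun x => ?_⟩
  have hx := hμg x
  simp only [g, ContinuousMap.coe_mk] at hx
  rw [integral_sub (integrable_const _)
    ((DualBall.integrable_norm_apply_rpow 𝕜 μ hp.le x).const_mul _), integral_const,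
    integral_const_mul] at hx
  rw [← inv_div p (n : ℝ), Real.le_mul_rpow_inv_iff (norm_nonneg _)
    (integral_nonneg fun _ => by positivity) hC.le hpn]
  simpa [sub_nonpos] using hx

theorem domIneq_of_measure (hn : n ≠ 0) (hp : 0 < p) (hC : 0 ≤ C)
    (μ : Measure (DualBall 𝕜 E)) [IsProbabilityMeasure μ]
    (h : ∀ x : E, ‖P x‖ ≤ C * (∫ φ, ‖φ.1 x‖ ^ p ∂μ) ^ ((n : ℝ) / p)) :
    DomIneq 𝕜 p n P C := by
  have hpn : 0 < p / n := by positivity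
  have hint (x : E) := DualBall.integrable_norm_apply_rpow 𝕜 μ hp.le x
  have hx (x : E) : ‖P x‖ ^ (p / n) ≤ C ^ (p / n) * ∫ φ, ‖φ.1 x‖ ^ p ∂μ := by
    rw [← Real.le_mul_rpow_inv_iff (norm_nonneg _) (integral_nonneg fun _ => by positivity) hC hpn,
      inv_div]
    exact h x
  refine (domIneq_iff 𝕜 hn hp hC).2 fun m x => ?_
  obtain ⟨φ, hφ⟩ := exists_integral_le (integrable_finsetSum _ fun j _ => hint (x j))
  refine ⟨φ, ?_⟩
  calc ∑ j, ‖P (x j)‖ ^ (p / n)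
      ≤ ∑ j, C ^ (p / n) * ∫ ψ, ‖ψ.1 (x j)‖ ^ p ∂μ := Finset.sum_le_sum fun j _ => hx (x j)
    _ = C ^ (p / n) * ∫ ψ, ∑ j, ‖ψ.1 (x j)‖ ^ p ∂μ := by
      rw [integral_finsetSum _ fun j _ => hint (x j), Finset.mul_sum]
    _ ≤ C ^ (p / n) * ∑ j, ‖φ.1 (x j)‖ ^ p := by gcongr

end Domination

variable (𝕜 : Type) [RCLike 𝕜] {E F : Type} [NormedAddCommGroup E] [NormedSpace 𝕜 E]
  [NormedAddCommGroup F] [NormedSpace 𝕜 F]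

theorem statement0
    (n : ℕ) (hn : 0 < n) (p : ℝ) (hp : 1 ≤ p) (P : E → F) (hP : IsHomogPoly 𝕜 n P) :
    ((∃ C > 0, DomIneq 𝕜 p n P C) ↔
      (∃ C > 0, ∃ μ : Measure (DualBall 𝕜 E), IsProbabilityMeasure μ ∧ μ.Regular ∧
        ∀ x : E, ‖P x‖ ≤ C * (∫ φ, ‖φ.1 x‖ ^ p ∂μ) ^ ((n : ℝ) / p))) ∧
    domNorm 𝕜 p n P =
      sInf {C : ℝ | 0 < C ∧ ∃ μ : Measure (DualBall 𝕜 E), IsProbabilityMeasure μ ∧ μ.Regular ∧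
        ∀ x : E, ‖P x‖ ≤ C * (∫ φ, ‖φ.1 x‖ ^ p ∂μ) ^ ((n : ℝ) / p)} := by
  have hp₀ : 0 < p := zero_lt_one.trans_le hp
  have key (C : ℝ) (hC : 0 < C) : DomIneq 𝕜 p n P C ↔
      ∃ μ : Measure (DualBall 𝕜 E), IsProbabilityMeasure μ ∧ μ.Regular ∧
        ∀ x : E, ‖P x‖ ≤ C * (∫ φ, ‖φ.1 x‖ ^ p ∂μ) ^ ((n : ℝ) / p) :=
    ⟨exists_measure_of_domIneq 𝕜 hn.ne' hp₀ hP hC,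
      fun ⟨μ, _, _, h⟩ => domIneq_of_measure 𝕜 hn.ne' hp₀ hC.le μ h⟩
  exact ⟨exists_congr fun C => and_congr_right (key C),
    congrArg sInf (Set.ext fun C => and_congr_right (key C))⟩
end

section
/- Let E be a Banach space, n a positive integer, 1 ≤ p < ∞, and let μ be a regular Borel probability measure on B_{E*} with the weak* topology. Then for every m and all x_1, …, x_m ∈ E, (Σ_{i=1}^m π_{p/n}((e_{x_i})^n)^{p/n})^{n/p} ≤ sup_{x* ∈ B_{E*}} (Σ_{i=1}^m |⟨x*, x_i⟩|^p)^{n/p}; that is, the n-homogeneous polynomial x ↦ (e_x)^n from E into (E^{p/n}, π_{p/n}) is p-dominated with ‖·‖_{d,p}-norm at most 1. -/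
open MeasureTheory Finset
open scoped Classical

noncomputable section

variable (𝕜 : Type) [RCLike 𝕜] {E F G : Type} [NormedAddCommGroup E] [NormedSpace 𝕜 E]
  [NormedAddCommGroup F] [NormedSpace 𝕜 F] [NormedAddCommGroup G] [NormedSpace 𝕜 G]

/-! By the one-term representation, `π_{p/n}((e_x)^n) ≤ ‖(e_x)^n‖_{p/n}`, and since the
`(p/n)`-th power of this norm is `∫ |⟨φ, x⟩|^p dμ`, summing over `i` bounds the left-hand side by
`∫ ∑ᵢ |⟨φ, xᵢ⟩|^p dμ`, which a probability measure keeps below the supremum over the dual ball. -/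

lemma le_iSup_rpow_rpow_inv {ι : Type*} {f : ι → ℝ} {r : ℝ} (hf : ∀ i, 0 ≤ f i) (hr : 0 < r)
    (hbdd : BddAbove (Set.range fun i => f i ^ r)) (i : ι) :
    f i ≤ (⨆ j, f j ^ r) ^ r⁻¹ :=
  (Real.le_rpow_inv_iff_of_pos (hf i) ((Real.rpow_nonneg (hf i) r).trans (le_ciSup hbdd i))
    hr).mpr (le_ciSup hbdd i)

namespace DualBall

variable {𝕜}

lemma norm_apply_le (φ : DualBall 𝕜 E) (y : E) : ‖φ.1 y‖ ≤ ‖y‖ := by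
  simpa using (WeakDual.toStrongDual φ.1).le_of_opNorm_le φ.2 y

lemma continuous_apply (y : E) : Continuous fun φ : DualBall 𝕜 E => φ.1 y :=
  (WeakDual.eval_continuous y).comp continuous_subtype_val

lemma bddAbove_range_sum_norm_apply_rpow {m : ℕ} (x : Fin m → E) {p r : ℝ} (hp : 0 ≤ p)
    (hr : 0 ≤ r) :
    BddAbove (Set.range fun φ : DualBall 𝕜 E => (∑ i, ‖φ.1 (x i)‖ ^ p) ^ r) := by
  refine ⟨(∑ i, ‖x i‖ ^ p) ^ r, ?_⟩
  rintro _ ⟨φ, rfl⟩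
  dsimp only
  gcongr with i
  exact norm_apply_le φ (x i)

variable {μ : Measure (DualBall 𝕜 E)} [IsFiniteMeasure μ]

lemma memLp_apply_pow (q : ENNReal) (n : ℕ) (y : E) :
    MemLp (fun φ : DualBall 𝕜 E => φ.1 y ^ n) q μ := by
  refine MemLp.of_bound ((continuous_apply y).pow n).aestronglyMeasurable (‖y‖ ^ n)
    (ae_of_all _ fun φ => ?_)
  rw [norm_pow]
  exact pow_le_pow_left₀ (norm_nonneg _) (norm_apply_le φ y) n

lemma integrable_norm_apply_rpow_s3 {p : ℝ} (hp : 0 ≤ p) (y : E) :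
    Integrable (fun φ : DualBall 𝕜 E => ‖φ.1 y‖ ^ p) μ := by
  refine Integrable.of_bound
    ((continuous_apply y).norm.rpow_const fun _ => Or.inr hp).aestronglyMeasurable
    (‖y‖ ^ p) (ae_of_all _ fun φ => ?_)
  rw [Real.norm_eq_abs, abs_of_nonneg (by positivity)]
  gcongr
  exact norm_apply_le φ y

end DualBall

section EvalPow

variable {𝕜} {p : ℝ} {n : ℕ} {μ : Measure (DualBall 𝕜 E)}

lemma norm_evalPowLp_rpow [IsFiniteMeasure μ] (hp : 0 < p) (hn : 0 < n) (y : E) :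
    ‖evalPowLp 𝕜 p n μ y‖ ^ (p / n) = ∫ φ, ‖φ.1 y‖ ^ p ∂μ := by
  have hpn : 0 < p / n := by positivity
  have hmem := DualBall.memLp_apply_pow (μ := μ) (ENNReal.ofReal (p / n)) n y
  rw [evalPowLp, dif_pos hmem, Lp.norm_toLp,
    hmem.eLpNorm_eq_integral_rpow_norm (by simpa using hpn) ENNReal.ofReal_ne_top,
    ENNReal.toReal_ofReal (by positivity), ENNReal.toReal_ofReal hpn.le,
    Real.rpow_inv_rpow (integral_nonneg fun _ => by positivity) hpn.ne']
  refine integral_congr_ae (ae_of_all _ fun φ => ?_)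
  dsimp only
  rw [norm_pow, ← Real.rpow_natCast, ← Real.rpow_mul (norm_nonneg _),
    mul_div_cancel₀ p (Nat.cast_ne_zero.mpr hn.ne')]

lemma norm_evalPowLp_nonneg (y : E) : 0 ≤ ‖evalPowLp 𝕜 p n μ y‖ :=
  ENNReal.toReal_nonneg

lemma piNorm_nonneg (g : Lp 𝕜 (ENNReal.ofReal (p / (n : ℝ))) μ) : 0 ≤ piNorm 𝕜 p n μ g := by
  refine Real.sInf_nonneg ?_
  rintro _ ⟨_, _, _, -, rfl⟩
  exact sum_nonneg fun _ _ => mul_nonneg (norm_nonneg _) (norm_evalPowLp_nonneg _)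

lemma piNorm_evalPowLp_le (y : E) :
    piNorm 𝕜 p n μ (evalPowLp 𝕜 p n μ y) ≤ ‖evalPowLp 𝕜 p n μ y‖ := by
  refine csInf_le ⟨0, ?_⟩ ⟨1, fun _ => 1, fun _ => y, by simp, by simp⟩
  rintro _ ⟨_, _, _, -, rfl⟩
  exact sum_nonneg fun _ _ => mul_nonneg (norm_nonneg _) (norm_evalPowLp_nonneg _)

end EvalPow

theorem statement3
    (n : ℕ) (hn : 0 < n) (p : ℝ) (hp : 1 ≤ p)
    (μ : Measure (DualBall 𝕜 E)) (hμ : IsProbabilityMeasure μ)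
    (m : ℕ) (x : Fin m → E) :
    (∑ i, piNorm 𝕜 p n μ (evalPowLp 𝕜 p n μ (x i)) ^ (p / (n : ℝ))) ^ ((n : ℝ) / p) ≤
      ⨆ φ : DualBall 𝕜 E, (∑ i, ‖φ.1 (x i)‖ ^ p) ^ ((n : ℝ) / p) := by
  have hp0 : 0 < p := one_pos.trans_le hp
  have hr : 0 < (n : ℝ) / p := by positivity
  set S := ⨆ φ : DualBall 𝕜 E, (∑ i, ‖φ.1 (x i)‖ ^ p) ^ ((n : ℝ) / p)
  have hS : 0 ≤ S := Real.iSup_nonneg fun _ => by positivity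
  have hsum_le (φ : DualBall 𝕜 E) : ∑ i, ‖φ.1 (x i)‖ ^ p ≤ S ^ ((n : ℝ) / p)⁻¹ :=
    le_iSup_rpow_rpow_inv (fun _ => by positivity) hr
      (DualBall.bddAbove_range_sum_norm_apply_rpow x hp0.le hr.le) φ
  calc (∑ i, piNorm 𝕜 p n μ (evalPowLp 𝕜 p n μ (x i)) ^ (p / (n : ℝ))) ^ ((n : ℝ) / p)
      ≤ (∑ i, ‖evalPowLp 𝕜 p n μ (x i)‖ ^ (p / (n : ℝ))) ^ ((n : ℝ) / p) := by
        gcongr with i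
        · exact sum_nonneg fun _ _ => Real.rpow_nonneg (piNorm_nonneg _) _
        · exact piNorm_nonneg _
        · exact piNorm_evalPowLp_le _
    _ = (∫ φ, ∑ i, ‖φ.1 (x i)‖ ^ p ∂μ) ^ ((n : ℝ) / p) := by
        rw [integral_finsetSum _ fun i _ => DualBall.integrable_norm_apply_rpow_s3 hp0.le (x i)]
        simp_rw [norm_evalPowLp_rpow hp0 hn]
    _ ≤ (∫ _, S ^ ((n : ℝ) / p)⁻¹ ∂μ) ^ ((n : ℝ) / p) := by
        refine Real.rpow_le_rpow (integral_nonneg fun _ => by positivity) ?_ hr.le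
        exact integral_mono (integrable_finsetSum _ fun i _ =>
          DualBall.integrable_norm_apply_rpow_s3 hp0.le (x i)) (integrable_const _) hsum_le
    _ = S := by rw [integral_const, probReal_univ, one_smul, Real.rpow_inv_rpow hS hr.ne']
end
end
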